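/- arXiv:2203.07299 — 3 statements merged into one kernel-verified Lean document; each statement's English description precedes it below -/
import Mathlib

section
/- Let 1 < p < ∞. The natural embedding of the Lebesgue sequence space ℓ_p into the weak Lebesgue sequence space ℓ_{p,∞} is strictly singular: for every infinite-dimensional closed linear subspace Z of ℓ_p, the infimum of ‖x‖_{p,∞} over all x ∈ Z with ‖x‖_p = 1 equals 0. -/
/-!
Inside an infinite-dimensional subspace `Z` of `ℓ_p` a gliding hump produces unit vectors
`u₀, u₁, …` with consecutive finite supports, each as close to `Z` as we wish; a vector of
their span is a disjoint sum, so its coefficients are bounded by its norm and it is close to `Z`.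

In the span we build unit vectors with `t ^ p · #{i | t < |y i|} ≤ G` for ever smaller `G`. If
the support of `y` lies below `n`, add `(G/2)^(1/p) · v`, where `v = n^(-1/p) (u_n + ⋯ + u_{2n-1})`
is a flat unit vector beyond that support. Levels `t` above the height of the flat part only see
`y`; below it, `y` contributes at most `n` indices and `v` is controlled by Chebyshev. So the
bound `G` survives, while the `p`-th power of the norm grows to `1 + G/2`; normalizing turns `G`
into `G / (1 + G/2)`, which drives `G` to `0`. The final perturbation into `Z` costs the
quasi-triangle constant `2 ^ p` only once.
-/

open scoped ENNReal

noncomputable def rearrangement (f : ℕ → ℝ) (k : ℕ) : ℝ :=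
  sInf {lam : ℝ | 0 ≤ lam ∧ {i : ℕ | lam < |f i|}.Finite ∧ {i : ℕ | lam < |f i|}.ncard ≤ k}

noncomputable def weakNorm (p : ℝ) (f : ℕ → ℝ) : ℝ :=
  ⨆ k : ℕ, ((k : ℝ) + 1) ^ (1 / p) * rearrangement f k

open Function Set

lemma abs_sum_apply_le_of_pairwiseDisjoint {ι α : Type*} {s : Finset ι} {f : ι → α → ℝ}
    (h : (s : Set ι).PairwiseDisjoint fun j => support (f j)) {b : ℝ} (hb0 : 0 ≤ b)
    (hb : ∀ j ∈ s, ∀ x, |f j x| ≤ b) (x : α) :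
    |∑ j ∈ s, f j x| ≤ b := by
  by_cases hx : ∃ j ∈ s, f j x ≠ 0
  · obtain ⟨j, hj, hjx⟩ := hx
    rw [Finset.sum_eq_single_of_mem j hj fun k hk hkj => ?_]
    · exact hb j hj x
    · by_contra hkx
      exact (h hk hj hkj).ne_of_mem hkx hjx rfl
  · push Not at hx
    rwa [Finset.sum_eq_zero hx, abs_zero]

lemma exists_ne_zero_mem_ker_of_not_finiteDimensional {K V W : Type*} [Field K] [AddCommGroup V]
    [Module K V] [AddCommGroup W] [Module K W] [FiniteDimensional K W] {Z : Submodule K V}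
    (hZ : ¬ FiniteDimensional K Z) (L : V →ₗ[K] W) : ∃ z ∈ Z, z ≠ 0 ∧ L z = 0 := by
  by_contra! h
  refine hZ (FiniteDimensional.of_injective (L ∘ₗ Z.subtype) ?_)
  rw [← LinearMap.ker_eq_bot, LinearMap.ker_eq_bot']
  intro z hz
  by_contra hz0
  exact h z z.2 (by exact_mod_cast hz0) hz

lemma norm_inv_norm_smul_sub_le {E : Type*} [NormedAddCommGroup E] [NormedSpace ℝ E] {y : E}
    (hy : ‖y‖ = 1) (x : E) : ‖‖x‖⁻¹ • x - y‖ ≤ 2 * ‖x - y‖ := by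
  rcases eq_or_ne x 0 with rfl | hx
  · simp [hy]
  have hx' : 0 < ‖x‖ := norm_pos_iff.2 hx
  have hscale : ‖‖x‖⁻¹ • x - x‖ ≤ ‖x - y‖ :=
    calc ‖‖x‖⁻¹ • x - x‖ = ‖(‖x‖⁻¹ - 1) • x‖ := by rw [sub_smul, one_smul]
      _ = |(‖x‖⁻¹ - 1) * ‖x‖| := by rw [norm_smul, Real.norm_eq_abs, abs_mul, abs_norm]
      _ = |‖y‖ - ‖x‖| := by rw [hy, sub_mul, inv_mul_cancel₀ hx'.ne', one_mul]
      _ ≤ ‖x - y‖ := by rw [norm_sub_rev]; exact abs_norm_sub_norm_le y x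
  calc ‖‖x‖⁻¹ • x - y‖ = ‖(‖x‖⁻¹ • x - x) + (x - y)‖ := by rw [sub_add_sub_cancel]
    _ ≤ ‖‖x‖⁻¹ • x - x‖ + ‖x - y‖ := norm_add_le _ _
    _ ≤ 2 * ‖x - y‖ := by linarith

lemma rearrangement_nonneg (f : ℕ → ℝ) (k : ℕ) : 0 ≤ rearrangement f k :=
  Real.sInf_nonneg fun _ hx => hx.1

lemma weakNorm_nonneg (p : ℝ) (f : ℕ → ℝ) : 0 ≤ weakNorm p f :=
  Real.iSup_nonneg fun k => mul_nonneg (by positivity) (rearrangement_nonneg f k)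

lemma rearrangement_le {f : ℕ → ℝ} {k : ℕ} {t : ℝ} (ht : 0 ≤ t)
    (hfin : {i | t < |f i|}.Finite) (hcard : {i | t < |f i|}.ncard ≤ k) :
    rearrangement f k ≤ t :=
  csInf_le ⟨0, fun _ hx => hx.1⟩ ⟨ht, hfin, hcard⟩

/-- Finiteness of the level sets is part of the definition: `ncard` of an infinite set is `0`. -/
def WeakLpBound (p : ℝ) (f : ℕ → ℝ) (C : ℝ) : Prop :=
  ∀ t > 0, {i | t < |f i|}.Finite ∧ t ^ p * {i | t < |f i|}.ncard ≤ C

namespace WeakLpBound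

variable {p A B C : ℝ} {f g : ℕ → ℝ}

lemma mono (h : WeakLpBound p f A) (hAB : A ≤ B) : WeakLpBound p f B :=
  fun t ht => ⟨(h t ht).1, (h t ht).2.trans hAB⟩

lemma nonneg (h : WeakLpBound p f C) : 0 ≤ C :=
  le_trans (by positivity) (h 1 one_pos).2

lemma smul (h : WeakLpBound p f C) {c : ℝ} (hc : c ≠ 0) :
    WeakLpBound p (c • f) (|c| ^ p * C) := by
  intro t ht
  have hc' : 0 < |c| := abs_pos.2 hc
  have hlevel : {i | t < |(c • f) i|} = {i | t / |c| < |f i|} := by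
    ext i
    simp only [mem_ofPred_eq, Pi.smul_apply, smul_eq_mul, abs_mul, div_lt_iff₀' hc']
  obtain ⟨hfin, hcard⟩ := h (t / |c|) (div_pos ht hc')
  refine ⟨hlevel ▸ hfin, ?_⟩
  have ht_eq : t ^ p = |c| ^ p * (t / |c|) ^ p := by
    rw [← Real.mul_rpow hc'.le (by positivity), mul_div_cancel₀ _ hc'.ne']
  rw [hlevel, ht_eq, mul_assoc]
  gcongr

lemma add (hf : WeakLpBound p f A) (hg : WeakLpBound p g B) :
    WeakLpBound p (f + g) (2 ^ p * (A + B)) := by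
  intro t ht
  have hsub : {i | t < |(f + g) i|} ⊆ {i | t / 2 < |f i|} ∪ {i | t / 2 < |g i|} := by
    intro i hi
    by_contra hcon
    simp only [mem_union, mem_ofPred_eq, not_or, not_lt, Pi.add_apply] at hi hcon
    linarith [abs_add_le (f i) (g i)]
  obtain ⟨hfinf, hcardf⟩ := hf (t / 2) (by positivity)
  obtain ⟨hfing, hcardg⟩ := hg (t / 2) (by positivity)
  have hcard : ({i | t < |(f + g) i|}.ncard : ℝ) ≤
      {i | t / 2 < |f i|}.ncard + {i | t / 2 < |g i|}.ncard := by
    exact_mod_cast (ncard_le_ncard hsub (hfinf.union hfing)).trans (ncard_union_le _ _)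
  refine ⟨(hfinf.union hfing).subset hsub, ?_⟩
  have ht_eq : t ^ p = 2 ^ p * (t / 2) ^ p := by
    rw [← Real.mul_rpow zero_le_two (by positivity), mul_div_cancel₀ _ two_ne_zero]
  calc t ^ p * {i | t < |(f + g) i|}.ncard
      ≤ 2 ^ p * ((t / 2) ^ p * {i | t / 2 < |f i|}.ncard +
          (t / 2) ^ p * {i | t / 2 < |g i|}.ncard) := by
        rw [ht_eq, ← mul_add, mul_assoc]; gcongr
    _ ≤ 2 ^ p * (A + B) := by gcongr

/-- Below the height `s` of `g`, the level sets of `f` have at most `n` elements; above it,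
only `f` counts. -/
lemma add_of_support_subset (hf : WeakLpBound p f A) (hg : WeakLpBound p g B) (hp : 0 ≤ p)
    {n : ℕ} (hfn : support f ⊆ Iio n) (hgn : support g ⊆ Ici n) {s : ℝ} (hgs : ∀ i, |g i| ≤ s) :
    WeakLpBound p (f + g) (max A (s ^ p * n + B)) := by
  intro t ht
  have hsub : {i | t < |(f + g) i|} ⊆ {i | t < |f i|} ∪ {i | t < |g i|} := by
    intro i hi
    by_cases hfi : f i = 0
    · exact Or.inr (by simpa [hfi] using hi)
    · have hgi : g i = 0 := by
        by_contra hgi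
        exact (mem_Ici.1 (hgn hgi)).not_gt (hfn hfi)
      exact Or.inl (by simpa [hgi] using hi)
  obtain ⟨hfinf, hcardf⟩ := hf t ht
  obtain ⟨hfing, hcardg⟩ := hg t ht
  have hcard : ({i | t < |(f + g) i|}.ncard : ℝ) ≤
      {i | t < |f i|}.ncard + {i | t < |g i|}.ncard := by
    exact_mod_cast (ncard_le_ncard hsub (hfinf.union hfing)).trans (ncard_union_le _ _)
  refine ⟨(hfinf.union hfing).subset hsub, ?_⟩
  rcases le_or_gt s t with hst | hts
  · have hempty : {i | t < |g i|} = ∅ :=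
      eq_empty_of_forall_notMem fun i hi => (hgs i).not_gt (hst.trans_lt hi)
    rw [hempty, ncard_empty, Nat.cast_zero, add_zero] at hcard
    exact le_max_of_le_left ((mul_le_mul_of_nonneg_left hcard (by positivity)).trans hcardf)
  · have hcardn : ({i | t < |f i|}.ncard : ℝ) ≤ n := by
      have hsubn : {i | t < |f i|} ⊆ Iio n := fun i hi =>
        hfn (abs_pos.1 (ht.trans hi))
      have := ncard_le_ncard hsubn (finite_Iio n)
      exact_mod_cast (ncard_Iio_nat n) ▸ this
    refine le_max_of_le_right ?_
    calc t ^ p * {i | t < |(f + g) i|}.ncard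
        ≤ t ^ p * {i | t < |f i|}.ncard + t ^ p * {i | t < |g i|}.ncard := by
          rw [← mul_add]; gcongr
      _ ≤ s ^ p * n + B := by
          have hts_p : t ^ p ≤ s ^ p := Real.rpow_le_rpow ht.le hts.le hp
          gcongr
          · exact (Real.rpow_nonneg ht.le p).trans hts_p

lemma weakNorm_le (h : WeakLpBound p f C) (hp : 0 < p) :
    weakNorm p f ≤ C ^ (1 / p) := by
  have hC := h.nonneg
  refine Real.iSup_le (fun k => ?_) (by positivity)
  have hk : (0 : ℝ) < k + 1 := by positivity
  have hrearr : rearrangement f k ≤ (C / (k + 1)) ^ (1 / p) := by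
    refine le_of_forall_gt_imp_ge_of_dense fun t ht => ?_
    have ht0 : 0 < t := lt_of_le_of_lt (by positivity) ht
    obtain ⟨hfin, hcard⟩ := h t ht0
    refine rearrangement_le ht0.le hfin ?_
    have htp : C < t ^ p * (k + 1) := by
      rw [← div_lt_iff₀ hk]
      calc C / (k + 1) = ((C / (k + 1)) ^ (1 / p)) ^ p := by
            rw [one_div, Real.rpow_inv_rpow (by positivity) hp.ne']
        _ < t ^ p := Real.rpow_lt_rpow (by positivity) ht hp
    have : ({i | t < |f i|}.ncard : ℝ) < k + 1 :=
      lt_of_mul_lt_mul_left (hcard.trans_lt htp) (by positivity)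
    exact_mod_cast Nat.lt_succ_iff.1 (by exact_mod_cast this)
  calc ((k : ℝ) + 1) ^ (1 / p) * rearrangement f k
      ≤ ((k : ℝ) + 1) ^ (1 / p) * (C / (k + 1)) ^ (1 / p) := by gcongr
    _ = C ^ (1 / p) := by rw [← Real.mul_rpow hk.le (by positivity), mul_div_cancel₀ _ hk.ne']

end WeakLpBound

section LpSpace

variable {p : ℝ} [Fact (1 ≤ ENNReal.ofReal p)]

local notation "ℓp" => lp (fun _ : ℕ => ℝ) (ENNReal.ofReal p)

variable (p) in
lemma one_le_exponent : 1 ≤ p := ENNReal.one_le_ofReal.1 Fact.out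

variable (p) in
lemma exponent_pos : 0 < p := zero_lt_one.trans_le (one_le_exponent p)

variable (p) in
lemma toReal_ofReal_exponent : (ENNReal.ofReal p).toReal = p :=
  ENNReal.toReal_ofReal (zero_le_one.trans (one_le_exponent p))

lemma norm_rpow_eq_tsum_abs (f : ℓp) : ‖f‖ ^ p = ∑' i, |f i| ^ p := by
  have h := lp.norm_rpow_eq_tsum (by rw [toReal_ofReal_exponent]; exact exponent_pos p) f
  simpa only [toReal_ofReal_exponent, Real.norm_eq_abs] using h

lemma summable_abs_rpow (f : ℓp) : Summable fun i => |f i| ^ p := by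
  have h := (lp.memℓp f).summable (by rw [toReal_ofReal_exponent]; exact exponent_pos p)
  simpa only [toReal_ofReal_exponent, Real.norm_eq_abs] using h

lemma sum_abs_rpow_le_norm_rpow (f : ℓp) (s : Finset ℕ) : ∑ i ∈ s, |f i| ^ p ≤ ‖f‖ ^ p := by
  rw [norm_rpow_eq_tsum_abs]
  exact (summable_abs_rpow f).sum_le_tsum s fun i _ => by positivity

lemma abs_apply_le_norm (f : ℓp) (i : ℕ) : |f i| ≤ ‖f‖ :=
  lp.norm_apply_le_norm (ne_of_gt (zero_lt_one.trans_le Fact.out)) f i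

lemma weakLpBound_norm_rpow (f : ℓp) : WeakLpBound p f (‖f‖ ^ p) := by
  intro t ht
  have hsum : ∀ s : Finset ℕ, ↑s ⊆ {i | t < |f i|} → t ^ p * s.card ≤ ‖f‖ ^ p := by
    intro s hs
    calc t ^ p * s.card = ∑ _i ∈ s, t ^ p := by rw [Finset.sum_const, nsmul_eq_mul, mul_comm]
      _ ≤ ∑ i ∈ s, |f i| ^ p := Finset.sum_le_sum fun i hi =>
          Real.rpow_le_rpow ht.le (hs hi).le (exponent_pos p).le
      _ ≤ ‖f‖ ^ p := sum_abs_rpow_le_norm_rpow f s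
  have hfin : {i | t < |f i|}.Finite := by
    by_contra hinf
    obtain ⟨m, hm⟩ := exists_nat_gt (‖f‖ ^ p / t ^ p)
    obtain ⟨s, hs, hcard⟩ := Set.Infinite.exists_subset_card_eq hinf m
    have := hsum s hs
    rw [hcard, ← le_div_iff₀' (by positivity)] at this
    linarith
  refine ⟨hfin, ?_⟩
  simpa [ncard_eq_toFinset_card _ hfin] using hsum hfin.toFinset (by simp)

lemma norm_rpow_add_of_disjoint {f g : ℓp} (h : Disjoint (support f) (support g)) :
    ‖f + g‖ ^ p = ‖f‖ ^ p + ‖g‖ ^ p := by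
  have hp := (exponent_pos p).ne'
  rw [norm_rpow_eq_tsum_abs, norm_rpow_eq_tsum_abs, norm_rpow_eq_tsum_abs,
    ← (summable_abs_rpow f).tsum_add (summable_abs_rpow g)]
  refine tsum_congr fun i => ?_
  rw [lp.coeFn_add, Pi.add_apply]
  by_cases hfi : f i = 0
  · simp [hfi, Real.zero_rpow hp]
  · have hgi : g i = 0 := notMem_support.1 fun hgi => h.ne_of_mem hfi hgi rfl
    simp [hgi, Real.zero_rpow hp]

lemma norm_rpow_sum_of_pairwiseDisjoint {ι : Type*} {s : Finset ι} {f : ι → ℓp}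
    (h : (s : Set ι).PairwiseDisjoint fun j => support (f j)) :
    ‖∑ j ∈ s, f j‖ ^ p = ∑ j ∈ s, ‖f j‖ ^ p := by
  classical
  induction s using Finset.induction_on with
  | empty => simp [Real.zero_rpow (exponent_pos p).ne']
  | insert a s ha ih =>
    rw [Finset.coe_insert, Set.pairwiseDisjoint_insert] at h
    have hdisj : Disjoint (support (f a)) (support ⇑(∑ j ∈ s, f j)) := by
      have hsupp := Finset.support_sum s fun j => ⇑(f j)
      simp only [← Finset.sum_apply, ← lp.coeFn_sum] at hsupp
      refine Set.disjoint_of_subset_right hsupp ?_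
      simp only [Set.disjoint_iUnion_right]
      exact fun j hj => h.2 j hj (ne_of_mem_of_not_mem hj ha).symm
    rw [Finset.sum_insert ha, Finset.sum_insert ha, norm_rpow_add_of_disjoint hdisj, ih h.1]

end LpSpace

section BlockSequence

variable {p : ℝ}

local notation "ℓp" => lp (fun _ : ℕ => ℝ) (ENNReal.ofReal p)

structure IsBlockSequence (u : ℕ → ℓp) : Prop where
  norm_eq_one : ∀ j, ‖u j‖ = 1
  pairwise_disjoint : Pairwise (Disjoint on fun j => support (u j))
  support_subset_Ici : ∀ j, support (u j) ⊆ Ici j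
  hasFiniteSupport : ∀ j, HasFiniteSupport (u j)

open Submodule

lemma IsBlockSequence.hasFiniteSupport_of_mem_span {u : ℕ → ℓp} (hu : IsBlockSequence u) {y : ℓp}
    (hy : y ∈ span ℝ (range u)) : HasFiniteSupport y := by
  induction hy using Submodule.span_induction with
  | mem x hx =>
    obtain ⟨j, rfl⟩ := hx
    exact hu.hasFiniteSupport j
  | zero => rw [lp.coeFn_zero]; exact hasFiniteSupport_zero
  | add x y _ _ hx hy => rw [lp.coeFn_add]; exact hx.add hy
  | smul c x _ hx => rw [lp.coeFn_smul]; exact hx.subset (support_const_smul_subset c _)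

end BlockSequence

section Constructions

variable {p : ℝ} [Fact (1 ≤ ENNReal.ofReal p)]

local notation "ℓp" => lp (fun _ : ℕ => ℝ) (ENNReal.ofReal p)

open Submodule

/-- The witness is `n^(-1/p) (u_n + ⋯ + u_{2n-1})`. -/
lemma IsBlockSequence.exists_flat_mem_span {u : ℕ → ℓp} (hu : IsBlockSequence u) {n : ℕ}
    (hn : 0 < n) :
    ∃ v ∈ span ℝ (range u), ‖v‖ = 1 ∧ support v ⊆ Ici n ∧
      ∀ i, |v i| ≤ ((n : ℝ) ^ p⁻¹)⁻¹ := by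
  have hp := exponent_pos p
  set c : ℝ := ((n : ℝ) ^ p⁻¹)⁻¹ with hc
  have hc0 : 0 < c := by positivity
  set s := Finset.Ico n (2 * n)
  have hdisj : (s : Set ℕ).PairwiseDisjoint fun j => support (u j) :=
    hu.pairwise_disjoint.set_pairwise _
  have hnorm : ‖∑ j ∈ s, u j‖ = (n : ℝ) ^ p⁻¹ := by
    rw [← Real.rpow_rpow_inv (norm_nonneg (∑ j ∈ s, u j)) hp.ne',
      norm_rpow_sum_of_pairwiseDisjoint hdisj]
    simp [hu.norm_eq_one, s, two_mul]
  refine ⟨c • ∑ j ∈ s, u j,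
    smul_mem _ _ (sum_mem fun j _ => subset_span (mem_range_self j)), ?_, ?_, fun i => ?_⟩
  · rw [norm_smul, hnorm, Real.norm_of_nonneg hc0.le, hc, inv_mul_cancel₀ (by positivity)]
  · intro i hi
    rw [lp.coeFn_smul, lp.coeFn_sum] at hi
    obtain ⟨j, hj, hij⟩ : ∃ j ∈ s, i ∈ support (u j) := by
      by_contra! hcon
      exact hi (by rw [Pi.smul_apply, Finset.sum_apply,
        Finset.sum_eq_zero fun j hj => notMem_support.1 (hcon j hj), smul_zero])
    exact mem_Ici.2 ((Finset.mem_Ico.1 hj).1.trans (hu.support_subset_Ici j hij))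
  · rw [lp.coeFn_smul, lp.coeFn_sum, Pi.smul_apply, Finset.sum_apply, smul_eq_mul, abs_mul,
      abs_of_pos hc0]
    refine mul_le_of_le_one_right hc0.le (abs_sum_apply_le_of_pairwiseDisjoint hdisj zero_le_one
      (fun j _ i => ?_) i)
    exact (abs_apply_le_norm (u j) i).trans_eq (hu.norm_eq_one j)

/-- Adding `(G/2)^(1/p)` times a flat unit vector beyond the support of `y` keeps the weak bound
`G` and raises `‖·‖ ^ p` to `1 + G/2`; normalizing then divides the bound by `1 + G/2`. -/
lemma IsBlockSequence.exists_mem_span_weakLpBound_div {u : ℕ → ℓp} (hu : IsBlockSequence u)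
    {y : ℓp} (hy : y ∈ span ℝ (range u)) (hy1 : ‖y‖ = 1) {G : ℝ} (hG : 0 < G)
    (hyG : WeakLpBound p y G) :
    ∃ y' ∈ span ℝ (range u), ‖y'‖ = 1 ∧ WeakLpBound p y' (G / (1 + G / 2)) := by
  have hp := exponent_pos p
  obtain ⟨m, hm⟩ := (hu.hasFiniteSupport_of_mem_span hy).bddAbove
  have hyn : support y ⊆ Iio (m + 1) := fun i hi => Nat.lt_succ_of_le (hm hi)
  obtain ⟨v, hv, hv1, hvn, hvs⟩ := hu.exists_flat_mem_span m.succ_pos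
  set ε : ℝ := (G / 2) ^ p⁻¹
  have hε : 0 < ε := by positivity
  have hεp : ε ^ p = G / 2 := Real.rpow_inv_rpow (by positivity) hp.ne'
  have hwn : support (ε • v) ⊆ Ici (m + 1) := by
    rw [lp.coeFn_smul]; exact (support_const_smul_subset ε _).trans hvn
  have hws : ∀ i, |(ε • v) i| ≤ ε * (((m + 1 : ℕ) : ℝ) ^ p⁻¹)⁻¹ := fun i => by
    rw [lp.coeFn_smul, Pi.smul_apply, smul_eq_mul, abs_mul, abs_of_pos hε]
    exact mul_le_mul_of_nonneg_left (hvs i) hε.le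
  have hw_norm : ‖ε • v‖ ^ p = G / 2 := by
    rw [norm_smul, hv1, mul_one, Real.norm_of_nonneg hε.le, hεp]
  have hnorm : ‖y + ε • v‖ ^ p = 1 + G / 2 := by
    rw [norm_rpow_add_of_disjoint (disjoint_of_subset hyn hwn (Iio_disjoint_Ici le_rfl)), hy1,
      Real.one_rpow, hw_norm]
  have hbound : WeakLpBound p ⇑(y + ε • v) G := by
    refine ((hyG.add_of_support_subset (weakLpBound_norm_rpow (ε • v)) hp.le hyn hwn hws).mono
      (max_le le_rfl (le_of_eq ?_)))
    rw [hw_norm, Real.mul_rpow hε.le (by positivity), hεp, Real.inv_rpow (by positivity),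
      Real.rpow_inv_rpow (by positivity) hp.ne']
    field_simp
    ring
  have hne : y + ε • v ≠ 0 := fun h => by
    rw [h, norm_zero, Real.zero_rpow hp.ne'] at hnorm
    linarith
  have hpos : 0 < ‖y + ε • v‖ := norm_pos_iff.2 hne
  refine ⟨‖y + ε • v‖⁻¹ • (y + ε • v),
    smul_mem _ _ (add_mem hy (smul_mem _ _ hv)), norm_smul_inv_norm hne, ?_⟩
  rw [lp.coeFn_smul]
  refine (hbound.smul (inv_ne_zero hpos.ne')).mono (le_of_eq ?_)
  rw [abs_inv, abs_norm, Real.inv_rpow hpos.le, hnorm, inv_mul_eq_div]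

/-- `G ↦ G / (1 + G/2)` is `1/G ↦ 1/G + 1/2`, and one block has bound `1 = 2/2`. -/
lemma IsBlockSequence.exists_mem_span_weakLpBound {u : ℕ → ℓp} (hu : IsBlockSequence u)
    (k : ℕ) : ∃ y ∈ span ℝ (range u), ‖y‖ = 1 ∧ WeakLpBound p y (2 / (k + 2)) := by
  induction k with
  | zero =>
    refine ⟨u 0, subset_span (mem_range_self 0), hu.norm_eq_one 0, ?_⟩
    simpa [hu.norm_eq_one 0] using weakLpBound_norm_rpow (u 0)
  | succ k ih =>
    obtain ⟨y, hy, hy1, hyk⟩ := ih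
    obtain ⟨y', hy', hy'1, hy'k⟩ := hu.exists_mem_span_weakLpBound_div hy hy1 (by positivity) hyk
    refine ⟨y', hy', hy'1, hy'k.mono (le_of_eq ?_)⟩
    push_cast
    field_simp
    ring

lemma IsBlockSequence.abs_le_norm_sum_smul {u : ℕ → ℓp} (hu : IsBlockSequence u)
    (s : Finset ℕ) (c : ℕ → ℝ) {j : ℕ} (hj : j ∈ s) : |c j| ≤ ‖∑ i ∈ s, c i • u i‖ := by
  have hp := exponent_pos p
  have hdisj : (s : Set ℕ).PairwiseDisjoint fun i => support (c i • u i) :=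
    fun i _ k _ hik => by
      simp only [onFun, lp.coeFn_smul]
      exact (hu.pairwise_disjoint hik).mono (support_const_smul_subset _ _)
        (support_const_smul_subset _ _)
  rw [← Real.rpow_le_rpow_iff (abs_nonneg _) (norm_nonneg _) hp,
    norm_rpow_sum_of_pairwiseDisjoint hdisj]
  refine le_of_eq_of_le ?_ (Finset.single_le_sum (fun i _ => by positivity) hj)
  rw [norm_smul, hu.norm_eq_one, mul_one, Real.norm_eq_abs]

lemma IsBlockSequence.exists_mem_norm_sub_le {u : ℕ → ℓp} (hu : IsBlockSequence u)
    (Z : Submodule ℝ ℓp) {δ : ℕ → ℝ} (hδ : Summable δ) (huZ : ∀ j, ∃ z ∈ Z, ‖u j - z‖ ≤ δ j)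
    {y : ℓp} (hy : y ∈ span ℝ (range u)) : ∃ z ∈ Z, ‖y - z‖ ≤ (∑' j, δ j) * ‖y‖ := by
  choose z hzZ huz using huZ
  have hδ0 : ∀ j, 0 ≤ δ j := fun j => (norm_nonneg _).trans (huz j)
  obtain ⟨c, rfl⟩ := Finsupp.mem_span_range_iff_exists_finsupp.1 hy
  refine ⟨∑ j ∈ c.support, c j • z j, sum_mem fun j _ => smul_mem _ _ (hzZ j), ?_⟩
  simp only [Finsupp.sum]
  calc ‖∑ j ∈ c.support, c j • u j - ∑ j ∈ c.support, c j • z j‖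
      ≤ ∑ j ∈ c.support, |c j| * ‖u j - z j‖ := by
        rw [← Finset.sum_sub_distrib]
        refine (norm_sum_le _ _).trans_eq (Finset.sum_congr rfl fun j _ => ?_)
        rw [← smul_sub, norm_smul, Real.norm_eq_abs]
    _ ≤ ∑ j ∈ c.support, ‖∑ i ∈ c.support, c i • u i‖ * δ j :=
        Finset.sum_le_sum fun j hj =>
          mul_le_mul (hu.abs_le_norm_sum_smul _ c hj) (huz j) (norm_nonneg _) (norm_nonneg _)
    _ ≤ (∑' j, δ j) * ‖∑ i ∈ c.support, c i • u i‖ := by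
        rw [← Finset.mul_sum, mul_comm]
        exact mul_le_mul_of_nonneg_right (hδ.sum_le_tsum _ fun j _ => hδ0 j) (norm_nonneg _)

lemma exists_unit_mem_apply_eq_zero {Z : Submodule ℝ ℓp} (hZ : ¬ FiniteDimensional ℝ Z)
    (n : ℕ) : ∃ z ∈ Z, ‖z‖ = 1 ∧ ∀ i < n, z i = 0 := by
  let L : ℓp →ₗ[ℝ] (Fin n → ℝ) :=
    { toFun := fun f i => f i, map_add' := fun _ _ => rfl, map_smul' := fun _ _ => rfl }
  obtain ⟨z, hzZ, hz0, hLz⟩ := exists_ne_zero_mem_ker_of_not_finiteDimensional hZ L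
  refine ⟨‖z‖⁻¹ • z, Z.smul_mem _ hzZ, norm_smul_inv_norm hz0, fun i hi => ?_⟩
  rw [lp.coeFn_smul, Pi.smul_apply, show z i = 0 from congr_fun hLz ⟨i, hi⟩, smul_zero]

/-- A normalized truncation of a unit vector of `Z` that vanishes below `n`. -/
lemma exists_block {Z : Submodule ℝ ℓp} (hZ : ¬ FiniteDimensional ℝ Z) (n : ℕ) {δ : ℝ}
    (hδ : 0 < δ) :
    ∃ (b : ℓp) (N : ℕ), n < N ∧ ‖b‖ = 1 ∧ support b ⊆ Ico n N ∧ ∃ z ∈ Z, ‖b - z‖ ≤ δ := by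
  classical
  obtain ⟨z, hzZ, hz1, hzn⟩ := exists_unit_mem_apply_eq_zero hZ n
  set r := min (δ / 2) (1 / 2)
  have htend := (lp.hasSum_single ENNReal.ofReal_ne_top z).tendsto_sum_nat
  obtain ⟨N, hNz, hnN⟩ := ((htend.eventually (Metric.ball_mem_nhds z (by positivity : 0 < r))).and
    (Filter.eventually_gt_atTop n)).exists
  set t := ∑ i ∈ Finset.range N, lp.single (ENNReal.ofReal p) i (z i)
  have ht : ∀ i, t i = if i < N then z i else 0 := fun i => by
    simp only [t, lp.coeFn_sum, Finset.sum_apply, lp.coeFn_single, Finset.sum_pi_single,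
      Finset.mem_range]
  have htz : ‖t - z‖ < r := by rwa [← dist_eq_norm]
  have ht0 : t ≠ 0 := by
    rintro h
    rw [h, zero_sub, norm_neg, hz1] at htz
    linarith [min_le_right (δ / 2) (1 / 2)]
  refine ⟨‖t‖⁻¹ • t, N, hnN, norm_smul_inv_norm ht0, fun i hi => ?_, z, hzZ, ?_⟩
  · have hti : t i ≠ 0 := fun h => hi (by rw [lp.coeFn_smul, Pi.smul_apply, h, smul_zero])
    rw [ht] at hti
    split_ifs at hti with hiN
    · exact ⟨not_lt.1 fun hin => hti (hzn i hin), hiN⟩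
    · exact absurd rfl hti
  · calc ‖‖t‖⁻¹ • t - z‖ ≤ 2 * ‖t - z‖ := norm_inv_norm_smul_sub_le hz1 t
      _ ≤ δ := by linarith [min_le_left (δ / 2) (1 / 2)]

lemma exists_isBlockSequence {Z : Submodule ℝ ℓp} (hZ : ¬ FiniteDimensional ℝ Z) {δ : ℕ → ℝ}
    (hδ : ∀ j, 0 < δ j) : ∃ u : ℕ → ℓp, IsBlockSequence u ∧ ∀ j, ∃ z ∈ Z, ‖u j - z‖ ≤ δ j := by
  choose b N hN hb1 hbN hbZ using fun n j => exists_block hZ n (hδ j)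
  let M : ℕ → ℕ := fun j => Nat.rec 0 (fun j m => N m j) j
  have hM : StrictMono M := strictMono_nat_of_lt_succ fun j => hN (M j) j
  have hbM : ∀ j, support (b (M j) j) ⊆ Ico (M j) (M (j + 1)) := fun j => hbN (M j) j
  refine ⟨fun j => b (M j) j, ⟨fun j => hb1 _ _, fun i j hij => ?_, fun j => ?_, fun j => ?_⟩,
    fun j => hbZ _ _⟩
  · exact (hM.monotone.pairwise_disjoint_on_Ico_succ hij).mono (hbM i) (hbM j)
  · exact (hbM j).trans fun i hi => (hM.id_le j).trans hi.1
  · exact (finite_Ico _ _).subset (hbM j)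

/-- A unit vector of weak bound `2/(k+2)` in a block span lying within `σ` of `Z` is moved into
`Z`, at the price of the quasi-triangle constant `2^p`. -/
lemma exists_unit_mem_weakLpBound {Z : Submodule ℝ ℓp} (hZ : ¬ FiniteDimensional ℝ Z)
    {η : ℝ} (hη : 0 < η) : ∃ x ∈ Z, ‖x‖ = 1 ∧ WeakLpBound p x η := by
  have hp := exponent_pos p
  set θ := η / 2 ^ (p + 1) with hθ_def
  have hθ : 0 < θ := by positivity
  obtain ⟨k, hk⟩ := exists_nat_gt (2 / θ)
  set σ := min (1 / 2) (θ ^ p⁻¹ / 2)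
  have hσ : 0 < σ := by positivity
  obtain ⟨u, hu, huZ⟩ :=
    exists_isBlockSequence hZ (δ := fun j => σ / 2 / 2 ^ j) (by intro; positivity)
  obtain ⟨y, hy, hy1, hyk⟩ := hu.exists_mem_span_weakLpBound k
  obtain ⟨z, hzZ, hyz⟩ := hu.exists_mem_norm_sub_le Z (summable_geometric_two' σ) huZ hy
  rw [tsum_geometric_two', hy1, mul_one, norm_sub_rev] at hyz
  have hz0 : z ≠ 0 := by
    rintro rfl
    rw [zero_sub, norm_neg, hy1] at hyz
    linarith [min_le_left (1 / 2) (θ ^ p⁻¹ / 2)]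
  set x := ‖z‖⁻¹ • z
  have hxy : ‖x - y‖ ^ p ≤ θ := by
    calc ‖x - y‖ ^ p ≤ (θ ^ p⁻¹) ^ p := by
          refine Real.rpow_le_rpow (norm_nonneg _)
            ((norm_inv_norm_smul_sub_le hy1 z).trans ?_) hp.le
          linarith [min_le_right (1 / 2) (θ ^ p⁻¹ / 2)]
      _ = θ := Real.rpow_inv_rpow hθ.le hp.ne'
  have hkθ : 2 / ((k : ℝ) + 2) ≤ θ := by
    rw [div_lt_iff₀ hθ] at hk
    rw [div_le_iff₀ (by positivity)]
    nlinarith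
  refine ⟨x, Z.smul_mem _ hzZ, norm_smul_inv_norm hz0, ?_⟩
  have hx := hyk.add (weakLpBound_norm_rpow (x - y))
  rw [← lp.coeFn_add, add_sub_cancel] at hx
  refine hx.mono ?_
  calc 2 ^ p * (2 / ((k : ℝ) + 2) + ‖x - y‖ ^ p) ≤ 2 ^ p * (θ + θ) := by gcongr
    _ = η := by rw [hθ_def, Real.rpow_add_one two_ne_zero]; field_simp; ring

end Constructions

theorem embedding_lp_weak_lp_strictly_singular_general (p : ℝ)
    [Fact (1 ≤ ENNReal.ofReal p)]
    (Z : Submodule ℝ (lp (fun _ : ℕ => ℝ) (ENNReal.ofReal p)))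
    (hZinf : ¬ FiniteDimensional ℝ Z) :
    sInf {r : ℝ | ∃ x ∈ Z, ‖x‖ = 1 ∧ weakNorm p (⇑x) = r} = 0 := by
  have hp := exponent_pos p
  have hsmall : ∀ t > 0, ∃ x ∈ Z, ‖x‖ = 1 ∧ weakNorm p x ≤ t := fun t ht => by
    obtain ⟨x, hxZ, hx1, hx⟩ := exists_unit_mem_weakLpBound hZinf (Real.rpow_pos_of_pos ht p)
    refine ⟨x, hxZ, hx1, (hx.weakNorm_le hp).trans_eq ?_⟩
    rw [one_div, Real.rpow_rpow_inv ht.le hp.ne']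
  obtain ⟨x₁, hx₁Z, hx₁, -⟩ := hsmall 1 one_pos
  refine csInf_eq_of_forall_ge_of_forall_gt_exists_lt ⟨_, x₁, hx₁Z, hx₁, rfl⟩ ?_ fun t ht => ?_
  · rintro _ ⟨x, -, -, rfl⟩
    exact weakNorm_nonneg p x
  · obtain ⟨x, hxZ, hx1, hxt⟩ := hsmall (t / 2) (half_pos ht)
    exact ⟨_, ⟨x, hxZ, hx1, rfl⟩, hxt.trans_lt (half_lt_self ht)⟩

/-- The natural embedding `ℓ_p ↪ ℓ_{p,∞}` is strictly singular: on every
infinite-dimensional closed subspace `Z` of `ℓ_p`, the infimum of the weak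
quasinorm over the unit sphere of `Z` is `0`. -/
theorem embedding_lp_weak_lp_strictly_singular (p : ℝ) (hp : 1 < p)
    [Fact (1 ≤ ENNReal.ofReal p)]
    (Z : Submodule ℝ (lp (fun _ : ℕ => ℝ) (ENNReal.ofReal p)))
    (hZclosed : IsClosed (Z : Set (lp (fun _ : ℕ => ℝ) (ENNReal.ofReal p))))
    (hZinf : ¬ FiniteDimensional ℝ Z) :
    sInf {r : ℝ | ∃ x ∈ Z, ‖x‖ = 1 ∧ weakNorm p (⇑x) = r} = 0 :=
  embedding_lp_weak_lp_strictly_singular_general p Z hZinf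
end

section
/- Suppose 1 ≤ p < ∞. Let X ⊆ ℓ_p be a closed linear subspace with dim X = ∞, let n, N ∈ ℕ, ε > 0 and 0 < δ < 1. Then there exist m ∈ ℕ and u ∈ X with u(1) = … = u(n) = 0 such that, setting v := P_m(u) and w := R_m(u): (1) ‖u‖_p = 1; (2) m > 2n and m ≥ N; (3) supp v ⊆ {n+1, n+2, …, m}; (4) |v(j)| ≤ ε for all j; (5) 1 − δ ≤ ‖v‖_p ≤ 1; (6) ‖w‖_p ≤ δ. -/
/-! Gliding hump. Since `X` is infinite-dimensional, it contains unit vectors vanishing on any given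
initial segment, and each of them lies within `η` of a finitely supported head. Stacking `K` such
vectors with consecutive, disjointly supported heads gives `s ∈ X` within `Kη` of the sum `t` of the
heads, where `|t j| ≤ 1` and, by disjointness, `(2‖t‖)^p ≥ K`. For `Kη ≤ 1` and `K` large,
`s / ‖s‖` is a unit vector of `X` all of whose coordinates are at most `ε`; cutting it at an `m`
beyond which its tail has norm at most `δ` gives `v` and `w`. -/

open scoped ENNReal

/-- The `ℓ_p` (quasi)norm of a sequence, `‖f‖_p = (∑ |f j|^p)^{1/p}`. -/
noncomputable def lpNorm (p : ℝ) (f : ℕ → ℝ) : ℝ :=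
  (∑' j : ℕ, |f j| ^ p) ^ (1 / p)

/-- `P_m f` keeps the first `m` coordinates of `f` and sets the rest to zero. -/
def Pproj (m : ℕ) (f : ℕ → ℝ) : ℕ → ℝ := fun j => if j < m then f j else 0

/-- `R_m f` sets the first `m` coordinates of `f` to zero (the tail of `f`). -/
def Rproj (m : ℕ) (f : ℕ → ℝ) : ℕ → ℝ := fun j => if j < m then 0 else f j

open Filter Topology

local notation "ℓ^" p => lp (fun _ : ℕ => ℝ) p

namespace lp

variable {ι : Type*} {E : ι → Type*} [∀ i, NormedAddCommGroup (E i)] {p : ℝ≥0∞}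

theorem norm_add_rpow_of_disjoint (hp : 0 < p.toReal) {f g : lp E p}
    (h : ∀ i, f i = 0 ∨ g i = 0) :
    ‖f + g‖ ^ p.toReal = ‖f‖ ^ p.toReal + ‖g‖ ^ p.toReal := by
  refine (hasSum_norm hp (f + g)).unique ?_
  convert (hasSum_norm hp f).add (hasSum_norm hp g) using 1
  funext i
  rcases h i with h | h <;> simp [h, Real.zero_rpow hp.ne']

end lp

section Truncation

variable {p : ℝ≥0∞}

theorem lpNorm_toReal_eq_norm (hp : 0 < p.toReal) (f : ℓ^p) : lpNorm p.toReal f = ‖f‖ := by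
  simp only [lpNorm, lp.norm_eq_tsum_rpow hp, Real.norm_eq_abs]

noncomputable def head (m : ℕ) (f : ℓ^p) : ℓ^p := ∑ i ∈ Finset.range m, lp.single p i (f i)

theorem coe_head (m : ℕ) (f : ℓ^p) : ⇑(head m f) = Pproj m f := by
  funext j
  rw [head, lp.coeFn_sum, Finset.sum_apply]
  simp [Finset.sum_pi_single, Pproj]

theorem coe_sub_head (m : ℕ) (f : ℓ^p) : ⇑(f - head m f) = Rproj m f := by
  funext j
  rw [lp.coeFn_sub, Pi.sub_apply, coe_head]
  by_cases hj : j < m <;> simp [Pproj, Rproj, hj]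

theorem abs_head_apply_le (m : ℕ) (f : ℓ^p) (j : ℕ) : |head m f j| ≤ |f j| := by
  rw [coe_head, Pproj]
  split_ifs <;> simp

variable [Fact (1 ≤ p)]

theorem exists_le_norm_sub_head_le (hp : p ≠ ∞) (f : ℓ^p) (M : ℕ) {η : ℝ} (hη : 0 < η) :
    ∃ m, M ≤ m ∧ ‖f - head m f‖ ≤ η := by
  have h : Tendsto (fun m => ‖f - head m f‖) atTop (𝓝 0) := by
    simpa [head, norm_sub_rev] using
      tendsto_iff_norm_sub_tendsto_zero.1 (lp.hasSum_single hp f).tendsto_sum_nat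
  exact ((eventually_ge_atTop M).and (h.eventually_le_const hη)).exists

theorem norm_head_le (m : ℕ) (f : ℓ^p) : ‖head m f‖ ≤ ‖f‖ :=
  lp.norm_mono (zero_lt_one.trans_le Fact.out).ne' (abs_head_apply_le m f)

end Truncation

section GlidingHump

variable {p : ℝ≥0∞} [Fact (1 ≤ p)] (X : Submodule ℝ (ℓ^p))

theorem exists_mem_norm_eq_one_vanishing_below (hX : ¬FiniteDimensional ℝ X) (k : ℕ) :
    ∃ u ∈ X, ‖u‖ = 1 ∧ ∀ j < k, u j = 0 := by
  let φ : X →ₗ[ℝ] Fin k → ℝ :=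
    (LinearMap.pi fun j : Fin k => lp.evalₗ (𝕜 := ℝ) (fun _ : ℕ => ℝ) p j) ∘ₗ X.subtype
  have hker : LinearMap.ker φ ≠ ⊥ := fun h =>
    hX (Module.Finite.of_injective φ (LinearMap.ker_eq_bot.1 h))
  obtain ⟨x, hxker, hx0⟩ := Submodule.exists_mem_ne_zero_of_ne_bot hker
  have hx : (x : ℓ^p) ≠ 0 := by simpa using hx0
  refine ⟨‖(x : ℓ^p)‖⁻¹ • (x : ℓ^p), X.smul_mem _ x.2, norm_smul_inv_norm hx, fun j hj => ?_⟩
  have hxj : (x : ℓ^p) j = 0 := congrFun hxker ⟨j, hj⟩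
  simp [hxj]

/-- Stage `K` of the gliding hump: `s ∈ X` is a sum of `K` unit vectors of `X`, and `t` is the sum
of their heads, which are disjointly supported below `M`, each within `η` of its vector. -/
structure IsGlidingHump (n : ℕ) (η : ℝ) (K M : ℕ) (s t : ℓ^p) : Prop where
  n_le : n ≤ M
  mem : s ∈ X
  vanishing : ∀ j < n, s j = 0
  eq_zero_of_le : ∀ j, M ≤ j → t j = 0
  abs_le_one : ∀ j, |t j| ≤ 1
  norm_sub_le : ‖s - t‖ ≤ K * η
  le_rpow : (K : ℝ) ≤ (2 * ‖t‖) ^ p.toReal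

variable {X}

theorem IsGlidingHump.exists_succ (hp : p ≠ ∞) (hX : ¬FiniteDimensional ℝ X) {n : ℕ} {η : ℝ}
    (hη0 : 0 < η) (hη : η ≤ 1 / 2) {K M : ℕ} {s t : ℓ^p} (h : IsGlidingHump X n η K M s t) :
    ∃ M' s' t', IsGlidingHump X n η (K + 1) M' s' t' := by
  have hq : 0 < p.toReal := ENNReal.toReal_pos (zero_lt_one.trans_le Fact.out).ne' hp
  obtain ⟨u, huX, hu1, hu0⟩ := exists_mem_norm_eq_one_vanishing_below X hX M
  obtain ⟨m, hMm, hum⟩ := exists_le_norm_sub_head_le hp u M hη0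
  have hhead (j : ℕ) : head m u j = if j < m then u j else 0 := congrFun (coe_head m u) j
  have hdisj (j : ℕ) : t j = 0 ∨ head m u j = 0 := by
    by_cases hj : j < M
    · exact .inr (by simp [hhead, hu0 j hj])
    · exact .inl (h.eq_zero_of_le j (not_lt.1 hj))
  refine ⟨m, s + u, t + head m u, h.n_le.trans hMm, X.add_mem h.mem huX, fun j hj => ?_,
    fun j hj => ?_, fun j => ?_, ?_, ?_⟩
  · simp [h.vanishing j hj, hu0 j (hj.trans_le h.n_le)]
  · simp [h.eq_zero_of_le j (hMm.trans hj), hhead, not_lt.2 hj]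
  · have hu : |u j| ≤ 1 := hu1 ▸ lp.norm_apply_le_norm (zero_lt_one.trans_le Fact.out).ne' u j
    rcases hdisj j with h0 | h0
    · simpa [h0] using (abs_head_apply_le m u j).trans hu
    · simpa [h0] using h.abs_le_one j
  · calc ‖s + u - (t + head m u)‖ = ‖(s - t) + (u - head m u)‖ := by abel_nf
      _ ≤ K * η + η := (norm_add_le _ _).trans (add_le_add h.norm_sub_le hum)
      _ = (K + 1 : ℕ) * η := by push_cast; ring
  · have hh : 1 ≤ 2 * ‖head m u‖ := by linarith [norm_sub_norm_le u (head m u)]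
    rw [Real.mul_rpow zero_le_two (norm_nonneg _), lp.norm_add_rpow_of_disjoint hq hdisj, mul_add,
      ← Real.mul_rpow zero_le_two (norm_nonneg _), ← Real.mul_rpow zero_le_two (norm_nonneg _)]
    push_cast
    linarith [h.le_rpow, Real.one_le_rpow hh hq.le]

theorem exists_isGlidingHump (hp : p ≠ ∞) (hX : ¬FiniteDimensional ℝ X) (n : ℕ) {η : ℝ}
    (hη0 : 0 < η) (hη : η ≤ 1 / 2) : ∀ K : ℕ, ∃ M s t, IsGlidingHump X n η K M s t
  | 0 => ⟨n, 0, 0, le_rfl, X.zero_mem, by simp, by simp, by simp, by simp,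
      by simpa using Real.rpow_nonneg le_rfl _⟩
  | K + 1 =>
    let ⟨_, _, _, h⟩ := exists_isGlidingHump hp hX n hη0 hη K
    h.exists_succ hp hX hη0 hη

theorem exists_mem_abs_le_two_le_norm (hp : p ≠ ∞) (hX : ¬FiniteDimensional ℝ X) (n : ℕ)
    {R : ℝ} (hR : 0 ≤ R) : ∃ s ∈ X, (∀ j < n, s j = 0) ∧ (∀ j, |s j| ≤ 2) ∧ R ≤ ‖s‖ := by
  have hq : 0 < p.toReal := ENNReal.toReal_pos (zero_lt_one.trans_le Fact.out).ne' hp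
  set K := ⌈(2 * (R + 1)) ^ p.toReal⌉₊
  have hη0 : (0 : ℝ) < 1 / (2 * (K + 1)) := by positivity
  have hη : (1 : ℝ) / (2 * (K + 1)) ≤ 1 / 2 := by gcongr; linarith [K.cast_nonneg (α := ℝ)]
  obtain ⟨M, s, t, h⟩ := exists_isGlidingHump hp hX n hη0 hη K
  have hst : ‖s - t‖ ≤ 1 := by
    refine h.norm_sub_le.trans ?_
    rw [mul_one_div, div_le_one (by positivity)]
    linarith [K.cast_nonneg (α := ℝ)]
  have ht : R + 1 ≤ ‖t‖ := by
    have h2 : (2 * (R + 1)) ^ p.toReal ≤ (2 * ‖t‖) ^ p.toReal := (Nat.le_ceil _).trans h.le_rpow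
    linarith [(Real.rpow_le_rpow_iff (by positivity) (by positivity) hq).1 h2]
  refine ⟨s, h.mem, h.vanishing, fun j => ?_, ?_⟩
  · have hj := lp.norm_apply_le_norm (zero_lt_one.trans_le Fact.out).ne' (s - t) j
    have hsj : s j = t j + (s - t) j := by simp
    rw [Real.norm_eq_abs] at hj
    rw [hsj]
    linarith [abs_add_le (t j) ((s - t) j), h.abs_le_one j]
  · linarith [norm_sub_norm_le t s, norm_sub_rev t s]

theorem exists_mem_norm_eq_one_abs_le (hp : p ≠ ∞) (hX : ¬FiniteDimensional ℝ X) (n : ℕ) {ε : ℝ}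
    (hε : 0 < ε) : ∃ u ∈ X, ‖u‖ = 1 ∧ (∀ j < n, u j = 0) ∧ ∀ j, |u j| ≤ ε := by
  obtain ⟨s, hsX, hs0, hs2, hsR⟩ := exists_mem_abs_le_two_le_norm hp hX n (R := 2 / ε) (by positivity)
  have hs : 0 < ‖s‖ := (by positivity : 0 < 2 / ε).trans_le hsR
  refine ⟨‖s‖⁻¹ • s, X.smul_mem _ hsX, norm_smul_inv_norm (norm_pos_iff.1 hs),
    fun j hj => by simp [hs0 j hj], fun j => ?_⟩
  calc |(‖s‖⁻¹ • s) j| = |s j| / ‖s‖ := by simp [abs_mul, abs_of_pos hs, div_eq_inv_mul]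
    _ ≤ 2 / (2 / ε) := div_le_div₀ zero_le_two (hs2 j) (by positivity) hsR
    _ = ε := by field_simp

end GlidingHump

theorem exists_flat_almost_normalized_element_general (p : ℝ) (hp : 1 ≤ p)
    [Fact (1 ≤ ENNReal.ofReal p)]
    (X : Submodule ℝ (lp (fun _ : ℕ => ℝ) (ENNReal.ofReal p)))
    (hXinf : ¬ FiniteDimensional ℝ X)
    (n N : ℕ) (ε : ℝ) (hε : 0 < ε) (δ : ℝ) (hδ0 : 0 < δ) :
    ∃ (m : ℕ) (u : lp (fun _ : ℕ => ℝ) (ENNReal.ofReal p)),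
      u ∈ X ∧ (∀ j < n, (⇑u : ℕ → ℝ) j = 0) ∧
      ‖u‖ = 1 ∧
      2 * n < m ∧ N ≤ m ∧
      Function.support (Pproj m (⇑u)) ⊆ Set.Ico n m ∧
      (∀ j : ℕ, |Pproj m (⇑u) j| ≤ ε) ∧
      (1 - δ ≤ lpNorm p (Pproj m (⇑u)) ∧ lpNorm p (Pproj m (⇑u)) ≤ 1) ∧
      lpNorm p (Rproj m (⇑u)) ≤ δ := by
  have hq : (ENNReal.ofReal p).toReal = p := ENNReal.toReal_ofReal (by linarith)
  have hlpNorm (f : lp (fun _ : ℕ => ℝ) (ENNReal.ofReal p)) : lpNorm p f = ‖f‖ := by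
    rw [← lpNorm_toReal_eq_norm (by linarith) f, hq]
  obtain ⟨u, huX, hu1, hu0, huε⟩ :=
    exists_mem_norm_eq_one_abs_le ENNReal.ofReal_ne_top hXinf n hε
  obtain ⟨m, hm, hum⟩ := exists_le_norm_sub_head_le ENNReal.ofReal_ne_top u (max N (2 * n + 1)) hδ0
  refine ⟨m, u, huX, hu0, hu1, by omega, by omega, fun j hj => ?_, fun j => ?_, ⟨?_, ?_⟩, ?_⟩
  · by_contra hjnm
    refine hj ?_
    rcases lt_or_ge j n with hjn | hjn
    · simp [Pproj, hu0 j hjn]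
    · simp [Pproj, show ¬j < m from fun hjm => hjnm ⟨hjn, hjm⟩]
  · rw [← coe_head]
    exact (abs_head_apply_le m u j).trans (huε j)
  · rw [← coe_head, hlpNorm]
    linarith [norm_sub_norm_le u (head m u)]
  · rw [← coe_head, hlpNorm, ← hu1]
    exact norm_head_le m u
  · rwa [← coe_sub_head, hlpNorm]

/-- In an infinite-dimensional closed subspace `X ⊆ ℓ_p` one can find, for any
`n, N, ε, δ`, a norm-one element `u` vanishing on the first `n` coordinates
whose head `v = P_m u` is supported in `{n+1, …, m}` (0-indexed: `[n, m)`),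
has small coordinates and almost full norm, while the tail `w = R_m u` is small. -/
theorem exists_flat_almost_normalized_element (p : ℝ) (hp : 1 ≤ p)
    [Fact (1 ≤ ENNReal.ofReal p)]
    (X : Submodule ℝ (lp (fun _ : ℕ => ℝ) (ENNReal.ofReal p)))
    (hXclosed : IsClosed (X : Set (lp (fun _ : ℕ => ℝ) (ENNReal.ofReal p))))
    (hXinf : ¬ FiniteDimensional ℝ X)
    (n N : ℕ) (ε : ℝ) (hε : 0 < ε) (δ : ℝ) (hδ0 : 0 < δ) (hδ1 : δ < 1) :
    ∃ (m : ℕ) (u : lp (fun _ : ℕ => ℝ) (ENNReal.ofReal p)),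
      u ∈ X ∧ (∀ j < n, (⇑u : ℕ → ℝ) j = 0) ∧
      ‖u‖ = 1 ∧
      2 * n < m ∧ N ≤ m ∧
      Function.support (Pproj m (⇑u)) ⊆ Set.Ico n m ∧
      (∀ j : ℕ, |Pproj m (⇑u) j| ≤ ε) ∧
      (1 - δ ≤ lpNorm p (Pproj m (⇑u)) ∧ lpNorm p (Pproj m (⇑u)) ≤ 1) ∧
      lpNorm p (Rproj m (⇑u)) ≤ δ :=
  exists_flat_almost_normalized_element_general p hp X hXinf n N ε hε δ hδ0
end

section
/- Suppose 1 ≤ p < ∞. Let X ⊆ ℓ_p be a closed linear subspace with dim X = ∞, let n ∈ ℕ and 0 < δ < 1. Then there exist a strictly increasing sequence of indices n = n_0 < n_1 < n_2 < … and elements u_i ∈ X (i ≥ 1) such that for every i ≥ 1: ‖u_i‖_p = 1; u_i(j) = 0 for all j ≤ n_{i−1}; and, setting v_i := P_{n_i}(u_i) and w_i := R_{n_i}(u_i), one has supp v_i ⊆ {n_{i−1}+1, …, n_i}, 1 − δ/2^i ≤ ‖v_i‖_p ≤ 1, and ‖w_i‖_p ≤ δ/2^i. -/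
open scoped ENNReal

section Aux

variable {p : ℝ} [Fact (1 ≤ ENNReal.ofReal p)]

private lemma aux_summable (hp : 1 ≤ p) (f : lp (fun _ : ℕ => ℝ) (ENNReal.ofReal p)) :
    Summable fun j => |(f : ℕ → ℝ) j| ^ p := by
  have h0 : (0:ℝ) < p := lt_of_lt_of_le one_pos hp
  have ht : (ENNReal.ofReal p).toReal = p := ENNReal.toReal_ofReal h0.le
  have := (lp.memℓp f).summable (by rw [ht]; exact h0)
  simpa [ht, Real.norm_eq_abs] using this

private lemma aux_norm_eq (hp : 1 ≤ p) (f : lp (fun _ : ℕ => ℝ) (ENNReal.ofReal p)) :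
    ‖f‖ = lpNorm p (⇑f) := by
  have h0 : (0:ℝ) < p := lt_of_lt_of_le one_pos hp
  have ht : (ENNReal.ofReal p).toReal = p := ENNReal.toReal_ofReal h0.le
  rw [lp.norm_eq_tsum_rpow (by rw [ht]; exact h0), lpNorm]
  simp [ht, Real.norm_eq_abs]

private lemma aux_summable_of_le (hp : 1 ≤ p) (f : lp (fun _ : ℕ => ℝ) (ENNReal.ofReal p))
    {g : ℕ → ℝ} (hle : ∀ j, |g j| ≤ |(f : ℕ → ℝ) j|) :
    Summable fun j => |g j| ^ p := by
  have h0 : (0:ℝ) < p := lt_of_lt_of_le one_pos hp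
  exact Summable.of_nonneg_of_le (fun j => Real.rpow_nonneg (abs_nonneg _) p)
    (fun j => Real.rpow_le_rpow (abs_nonneg _) (hle j) h0.le) (aux_summable hp f)

private lemma aux_memℓp_of_le (hp : 1 ≤ p) (f : lp (fun _ : ℕ => ℝ) (ENNReal.ofReal p))
    {g : ℕ → ℝ} (hle : ∀ j, |g j| ≤ |(f : ℕ → ℝ) j|) :
    Memℓp g (ENNReal.ofReal p) := by
  have h0 : (0:ℝ) < p := lt_of_lt_of_le one_pos hp
  have ht : (ENNReal.ofReal p).toReal = p := ENNReal.toReal_ofReal h0.le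
  apply memℓp_gen
  rw [ht]
  simpa [Real.norm_eq_abs] using aux_summable_of_le hp f hle

private lemma aux_P_le (m : ℕ) (f : ℕ → ℝ) (j : ℕ) : |Pproj m f j| ≤ |f j| := by
  by_cases hj : j < m <;> simp [Pproj, hj, abs_nonneg]

private lemma aux_R_le (m : ℕ) (f : ℕ → ℝ) (j : ℕ) : |Rproj m f j| ≤ |f j| := by
  by_cases hj : j < m <;> simp [Rproj, hj, abs_nonneg]

/-- Head norm bounds: `‖P_m u‖_p ≤ ‖u‖` and the triangle inequality
`‖u‖ ≤ ‖P_m u‖_p + ‖R_m u‖_p`. -/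
private lemma aux_head_bounds (hp : 1 ≤ p) (u : lp (fun _ : ℕ => ℝ) (ENNReal.ofReal p)) (m : ℕ) :
    lpNorm p (Pproj m ⇑u) ≤ ‖u‖ ∧
      ‖u‖ ≤ lpNorm p (Pproj m ⇑u) + lpNorm p (Rproj m ⇑u) := by
  have h0 : (0:ℝ) < p := lt_of_lt_of_le one_pos hp
  have hPm : Memℓp (Pproj m ⇑u) (ENNReal.ofReal p) := aux_memℓp_of_le hp u (aux_P_le m ⇑u)
  have hRm : Memℓp (Rproj m ⇑u) (ENNReal.ofReal p) := aux_memℓp_of_le hp u (aux_R_le m ⇑u)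
  set A : lp (fun _ : ℕ => ℝ) (ENNReal.ofReal p) := ⟨Pproj m ⇑u, hPm⟩ with hA
  set B : lp (fun _ : ℕ => ℝ) (ENNReal.ofReal p) := ⟨Rproj m ⇑u, hRm⟩ with hB
  have hAB : A + B = u := by
    apply lp.ext
    funext j
    have : (⇑(A + B) : ℕ → ℝ) j = Pproj m (⇑u) j + Rproj m (⇑u) j := by
      rw [lp.coeFn_add]; rfl
    rw [this]
    by_cases hj : j < m <;> simp [Pproj, Rproj, hj]
  constructor
  · -- upper bound
    rw [aux_norm_eq hp u, lpNorm, lpNorm]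
    apply Real.rpow_le_rpow (tsum_nonneg fun j => Real.rpow_nonneg (abs_nonneg _) p)
    · exact Summable.tsum_le_tsum
        (fun j => Real.rpow_le_rpow (abs_nonneg _) (aux_P_le m ⇑u j) h0.le)
        (aux_summable_of_le hp u (aux_P_le m ⇑u)) (aux_summable hp u)
    · positivity
  · -- triangle
    have hnA : ‖A‖ = lpNorm p (Pproj m ⇑u) := aux_norm_eq hp A
    have hnB : ‖B‖ = lpNorm p (Rproj m ⇑u) := aux_norm_eq hp B
    calc ‖u‖ = ‖A + B‖ := by rw [hAB]
      _ ≤ ‖A‖ + ‖B‖ := norm_add_le A B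
      _ = _ := by rw [hnA, hnB]

/-- The tail norm of an `ℓ_p` element can be made arbitrarily small. -/
private lemma aux_tail_small (hp : 1 ≤ p) (u : lp (fun _ : ℕ => ℝ) (ENNReal.ofReal p))
    {ε : ℝ} (hε : 0 < ε) (k : ℕ) :
    ∃ m, k < m ∧ lpNorm p (Rproj m ⇑u) ≤ ε := by
  have h0 : (0:ℝ) < p := lt_of_lt_of_le one_pos hp
  have hsum : Summable fun j => |(u : ℕ → ℝ) j| ^ p := aux_summable hp u
  have htt := tendsto_sum_nat_add fun j => |(u : ℕ → ℝ) j| ^ p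
  have hev : ∀ᶠ m in Filter.atTop,
      (∑' j : ℕ, |(u : ℕ → ℝ) (j + m)| ^ p) < ε ^ p :=
    htt.eventually (gt_mem_nhds (Real.rpow_pos_of_pos hε p))
  obtain ⟨m, hm1, hm2⟩ := (hev.and (Filter.eventually_gt_atTop k)).exists
  refine ⟨m, hm2, ?_⟩
  have hFs : Summable fun j : ℕ => if j < m then (0:ℝ) else |(u : ℕ → ℝ) j| ^ p := by
    apply Summable.of_nonneg_of_le _ _ hsum
    · intro j; by_cases hj : j < m <;> simp [hj, Real.rpow_nonneg (abs_nonneg _)]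
    · intro j; by_cases hj : j < m <;> simp [hj, Real.rpow_nonneg (abs_nonneg _)]
  have hRval : ∀ j, |Rproj m (⇑u) j| ^ p = if j < m then (0:ℝ) else |(u : ℕ → ℝ) j| ^ p := by
    intro j
    by_cases hj : j < m <;> simp [Rproj, hj, Real.zero_rpow (ne_of_gt h0)]
  have hsum_eq : ∑' j : ℕ, |Rproj m (⇑u) j| ^ p = ∑' j : ℕ, |(u : ℕ → ℝ) (j + m)| ^ p := by
    calc ∑' j : ℕ, |Rproj m (⇑u) j| ^ p
        = ∑' j : ℕ, (if j < m then (0:ℝ) else |(u : ℕ → ℝ) j| ^ p) := tsum_congr hRval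
      _ = ∑' j : ℕ, |(u : ℕ → ℝ) (j + m)| ^ p := by
          rw [← Summable.sum_add_tsum_nat_add m hFs]
          have hz : ∑ i ∈ Finset.range m,
              (if i < m then (0:ℝ) else |(u : ℕ → ℝ) i| ^ p) = 0 :=
            Finset.sum_eq_zero fun i hi => by simp [Finset.mem_range.mp hi]
          rw [hz, zero_add]
          exact tsum_congr fun j => by simp [Nat.not_lt.mpr (Nat.le_add_left m j)]
  rw [lpNorm, hsum_eq]
  have hnn : (0:ℝ) ≤ ∑' j : ℕ, |(u : ℕ → ℝ) (j + m)| ^ p :=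
    tsum_nonneg fun j => Real.rpow_nonneg (abs_nonneg _) p
  calc (∑' j : ℕ, |(u : ℕ → ℝ) (j + m)| ^ p) ^ (1 / p)
      ≤ (ε ^ p) ^ (1 / p) := Real.rpow_le_rpow hnn hm1.le (by positivity)
    _ = ε := by rw [one_div, Real.rpow_rpow_inv hε.le (ne_of_gt h0)]

/-- In an infinite-dimensional subspace one finds unit vectors vanishing on any finite
initial segment of coordinates. -/
private lemma aux_exists_unit (hp : 1 ≤ p)
    (X : Submodule ℝ (lp (fun _ : ℕ => ℝ) (ENNReal.ofReal p)))
    (hXinf : ¬ FiniteDimensional ℝ X) (m : ℕ) :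
    ∃ u : lp (fun _ : ℕ => ℝ) (ENNReal.ofReal p),
      u ∈ X ∧ ‖u‖ = 1 ∧ ∀ j < m, (u : ℕ → ℝ) j = 0 := by
  let T : lp (fun _ : ℕ => ℝ) (ENNReal.ofReal p) →ₗ[ℝ] (Fin m → ℝ) :=
    { toFun := fun f => fun j => (f : ℕ → ℝ) (j : ℕ)
      map_add' := fun f g => by funext j; exact congrFun (lp.coeFn_add f g) (j : ℕ)
      map_smul' := fun c f => by funext j; exact congrFun (lp.coeFn_smul c f) (j : ℕ) }
  let S := T.comp X.subtype
  have hnotinj : ¬ Function.Injective S := fun hinj =>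
    hXinf (FiniteDimensional.of_injective S hinj)
  rw [← LinearMap.ker_eq_bot] at hnotinj
  obtain ⟨x, hxker, hx0⟩ := (Submodule.ne_bot_iff _).mp hnotinj
  have hSx : S x = 0 := hxker
  set y := x.1 with hy
  have hy0 : y ≠ 0 := fun h => hx0 (Subtype.ext h)
  have hny : ‖y‖ ≠ 0 := norm_ne_zero_iff.mpr hy0
  refine ⟨‖y‖⁻¹ • y, X.smul_mem _ x.2, ?_, ?_⟩
  · rw [norm_smul, norm_inv, norm_norm, inv_mul_cancel₀ hny]
  · intro j hj
    have hyj : (y : ℕ → ℝ) j = 0 := by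
      have := congrFun hSx ⟨j, hj⟩
      simpa [S, T] using this
    have : ((‖y‖⁻¹ • y : lp (fun _ : ℕ => ℝ) (ENNReal.ofReal p)) : ℕ → ℝ) j
        = ‖y‖⁻¹ * (y : ℕ → ℝ) j := by rw [lp.coeFn_smul]; rfl
    rw [this, hyj, mul_zero]

end Aux

/-- In an infinite-dimensional closed subspace `X ⊆ ℓ_p` one can find indices
`n = n₀ < n₁ < n₂ < ⋯` and norm-one elements `uᵢ ∈ X` (`i ≥ 1`) vanishing on the
first `n_{i-1}` coordinates, whose heads `vᵢ = P_{nᵢ} uᵢ` are supported in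
`{n_{i-1}+1, …, nᵢ}` (0-indexed: `[n_{i-1}, nᵢ)`) with `1 - δ/2^i ≤ ‖vᵢ‖_p ≤ 1`,
and whose tails `wᵢ = R_{nᵢ} uᵢ` satisfy `‖wᵢ‖_p ≤ δ/2^i`. -/
theorem exists_almost_disjoint_normalized_sequence (p : ℝ) (hp : 1 ≤ p)
    [Fact (1 ≤ ENNReal.ofReal p)]
    (X : Submodule ℝ (lp (fun _ : ℕ => ℝ) (ENNReal.ofReal p)))
    (hXclosed : IsClosed (X : Set (lp (fun _ : ℕ => ℝ) (ENNReal.ofReal p))))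
    (hXinf : ¬ FiniteDimensional ℝ X)
    (n : ℕ) (δ : ℝ) (hδ0 : 0 < δ) (hδ1 : δ < 1) :
    ∃ (nseq : ℕ → ℕ) (u : ℕ → lp (fun _ : ℕ => ℝ) (ENNReal.ofReal p)),
      nseq 0 = n ∧ StrictMono nseq ∧
      ∀ i : ℕ,
        u (i + 1) ∈ X ∧
        ‖u (i + 1)‖ = 1 ∧
        (∀ j < nseq i, (⇑(u (i + 1)) : ℕ → ℝ) j = 0) ∧
        Function.support (Pproj (nseq (i + 1)) (⇑(u (i + 1)))) ⊆
          Set.Ico (nseq i) (nseq (i + 1)) ∧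
        (1 - δ / 2 ^ (i + 1) ≤ lpNorm p (Pproj (nseq (i + 1)) (⇑(u (i + 1)))) ∧
          lpNorm p (Pproj (nseq (i + 1)) (⇑(u (i + 1)))) ≤ 1) ∧
        lpNorm p (Rproj (nseq (i + 1)) (⇑(u (i + 1)))) ≤ δ / 2 ^ (i + 1) := by
  have step : ∀ (i k : ℕ), ∃ (m : ℕ) (u : lp (fun _ : ℕ => ℝ) (ENNReal.ofReal p)),
      k < m ∧ u ∈ X ∧ ‖u‖ = 1 ∧ (∀ j < k, (u : ℕ → ℝ) j = 0) ∧
      lpNorm p (Rproj m ⇑u) ≤ δ / 2 ^ (i + 1) := by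
    intro i k
    obtain ⟨u, huX, hu1, hu0⟩ := aux_exists_unit hp X hXinf k
    have hεpos : 0 < δ / 2 ^ (i + 1) := by positivity
    obtain ⟨m, hkm, htail⟩ := aux_tail_small hp u hεpos k
    exact ⟨m, u, hkm, huX, hu1, hu0, htail⟩
  choose m' u' hlt hmem hnrm hzero htail using step
  let nseq : ℕ → ℕ := fun i => Nat.rec n (fun i prev => m' i prev) i
  refine ⟨nseq, fun i => Nat.rec 0 (fun i _ => u' i (nseq i)) i, rfl,
    strictMono_nat_of_lt_succ fun i => hlt i (nseq i), ?_⟩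
  intro i
  have hn1 : nseq (i + 1) = m' i (nseq i) := rfl
  set w := u' i (nseq i) with hw
  have hzero' : ∀ j < nseq i, (w : ℕ → ℝ) j = 0 := hzero i (nseq i)
  have htail' : lpNorm p (Rproj (nseq (i + 1)) ⇑w) ≤ δ / 2 ^ (i + 1) := by
    rw [hn1]; exact htail i (nseq i)
  have hhb := aux_head_bounds hp w (nseq (i + 1))
  have hnrm' : ‖w‖ = 1 := hnrm i (nseq i)
  refine ⟨hmem i (nseq i), hnrm', hzero', ?_, ⟨?_, ?_⟩, htail'⟩
  · intro j hj
    simp only [Function.mem_support, Pproj] at hj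
    by_cases hjlt : j < nseq (i + 1)
    · rw [if_pos hjlt] at hj
      refine Set.mem_Ico.mpr ⟨?_, hjlt⟩
      by_contra hjk
      exact hj (hzero' j (Nat.lt_of_not_le hjk))
    · exact absurd (if_neg hjlt) (fun h => hj h)
  · have h1 : (1:ℝ) ≤ lpNorm p (Pproj (nseq (i + 1)) ⇑w)
        + lpNorm p (Rproj (nseq (i + 1)) ⇑w) := by
      rw [← hnrm']; exact hhb.2
    linarith
  · have := hhb.1
    rwa [hnrm'] at this
end
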